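/- arXiv:1911.01842 — 8 statements merged into one kernel-verified Lean document; each statement's English description precedes it below -/
import Mathlib

section
/- Let $p \ge 3$ be a prime. Let $a$, $b$, $c$ be positive integers with $\gcd(a,b,c)=1$. Let $q = 2kp+1$ be a prime not dividing $a$, where $k$ is a positive integer. Define $\mu(p,q) = \{\eta^{2p} : \eta \in \mathbb{F}_q\}$ and $B(p,q) = \{\zeta \in \mu(p,q) : ((b\zeta + c)/a)^{2k} \in \{0,1\}\}$ (computed in $\mathbb{F}_q$). If $B(p,q) = \emptyset$, then there are no integers $w_1, w_2$ with $a w_2^p - b w_1^{2p} = c$. -/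
theorem sophie_germain_criterion
    (p : ℕ) (hp : p.Prime) (hp3 : 3 ≤ p)
    (a b c : ℕ) (ha : 0 < a) (hb : 0 < b) (hc : 0 < c)
    (hgcd : Nat.gcd a (Nat.gcd b c) = 1)
    (k : ℕ) (hk : 0 < k) (q : ℕ) (hq : q.Prime) (hqform : q = 2 * k * p + 1)
    (hqa : ¬ q ∣ a)
    (hB : {ζ : ZMod q | (∃ η : ZMod q, ζ = η ^ (2 * p)) ∧
        (((b : ZMod q) * ζ + (c : ZMod q)) * (a : ZMod q)⁻¹) ^ (2 * k)
          ∈ ({0, 1} : Set (ZMod q))} = ∅) :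
    ¬ ∃ w₁ w₂ : ℤ, (a : ℤ) * w₂ ^ p - (b : ℤ) * w₁ ^ (2 * p) = (c : ℤ) := by
  rintro ⟨w₁, w₂, hw⟩
  haveI : Fact q.Prime := ⟨hq⟩
  set ζ : ZMod q := (w₁ : ZMod q) ^ (2 * p) with hζ
  have ha0 : (a : ZMod q) ≠ 0 := by
    rw [Ne, ZMod.natCast_eq_zero_iff]; exact hqa
  have hmem : ζ ∈ {ζ : ZMod q | (∃ η : ZMod q, ζ = η ^ (2 * p)) ∧
      (((b : ZMod q) * ζ + (c : ZMod q)) * (a : ZMod q)⁻¹) ^ (2 * k)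
        ∈ ({0, 1} : Set (ZMod q))} := by
    refine ⟨⟨(w₁ : ZMod q), rfl⟩, ?_⟩
    have key : (b : ZMod q) * ζ + (c : ZMod q) = (a : ZMod q) * (w₂ : ZMod q) ^ p := by
      have h := congrArg (fun z : ℤ => ((z : ZMod q))) hw
      push_cast at h
      rw [hζ]
      linear_combination -h
    rw [key]
    have h2 : (a : ZMod q) * (w₂ : ZMod q) ^ p * (a : ZMod q)⁻¹ = (w₂ : ZMod q) ^ p := by
      field_simp
    rw [h2, ← pow_mul]
    by_cases hw2 : (w₂ : ZMod q) = 0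
    · left
      rw [hw2]
      exact zero_pow (by positivity)
    · right
      have hpk : p * (2 * k) = q - 1 := by rw [hqform, Nat.add_sub_cancel]; ring
      rw [hpk]
      exact ZMod.pow_card_sub_one_eq_one hw2
  rw [hB] at hmem
  exact hmem
end

section
/- Let $m$ be a squarefree positive integer, $K = \mathbb{Q}(\sqrt{-m})$ with ring of integers $\mathcal{O}$, and let $p$ be an odd prime. Let $v, n$ be nonzero integers and $\epsilon \in K^*$. Let $\mathfrak{q}$ be a nonzero prime ideal of $\mathcal{O}$, and write $\mathrm{ord}_\mathfrak{q}$ for the $\mathfrak{q}$-adic valuation on $K^*$. Suppose one of the following holds: (i) $\mathrm{ord}_\mathfrak{q}(v)$, $\mathrm{ord}_\mathfrak{q}(n\sqrt{-m})$, $\mathrm{ord}_\mathfrak{q}(\epsilon)$ are pairwise distinct modulo $p$; (ii) $\mathrm{ord}_\mathfrak{q}(2v)$, $\mathrm{ord}_\mathfrak{q}(\epsilon)$, $\mathrm{ord}_\mathfrak{q}(\overline{\epsilon})$ are pairwise distinct modulo $p$; (iii) $\mathrm{ord}_\mathfrak{q}(2n\sqrt{-m})$, $\mathrm{ord}_\mathfrak{q}(\epsilon)$,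 $\mathrm{ord}_\mathfrak{q}(\overline{\epsilon})$ are pairwise distinct modulo $p$. Then there is no nonzero integer $\sigma$ and no $\eta \in K^*$ satisfying $v\sigma^p + n\sqrt{-m} = \epsilon\eta^p$. -/
open IsDedekindDomain

open scoped Classical

/-- The `𝔮`-adic valuation (normalized additively, as an integer) of a nonzero
element of a number field `K`; we set it to `0` at `x = 0`. -/
noncomputable def ordAt {K : Type*} [Field K] [NumberField K]
    (𝔮 : HeightOneSpectrum (NumberField.RingOfIntegers K)) (x : K) : ℤ :=
  if hx : x = 0 then 0
  else - Multiplicative.toAdd (WithZero.unzero (((𝔮.valuation K).ne_zero_iff).mpr hx))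

/-!
Conjugating `v σ^p + n √-m = ε η^p` gives `v σ^p - n √-m = ε̄ η̄^p`, so each of the triples
`(v σ^p, n √-m, ε η^p)`, `(ε η^p, ε̄ η̄^p, 2v σ^p)` and `(2n √-m, ε̄ η̄^p, ε η^p)` satisfies
`A + B = C`. By the ultrametric inequality two terms of such a triple have the same
`𝔮`-adic valuation, while `ord_𝔮 (a x^p) ≡ ord_𝔮 a` modulo `p`.
-/

theorem Valuation.eq_or_eq_or_eq_of_add_eq {R Γ₀ : Type*} [Ring R]
    [LinearOrderedCommMonoidWithZero Γ₀] (w : Valuation R Γ₀) {a b c : R} (habc : a + b = c) :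
    w a = w b ∨ w a = w c ∨ w b = w c := by
  by_cases hab : w a = w b
  · exact Or.inl hab
  have hc : w c = max (w a) (w b) := habc ▸ w.map_add_of_distinct_val hab
  rcases max_cases (w a) (w b) with ⟨hmax, _⟩ | ⟨hmax, _⟩
  · exact Or.inr (Or.inl (hc.trans hmax).symm)
  · exact Or.inr (Or.inr (hc.trans hmax).symm)

section ordAt

variable {K : Type*} [Field K] [NumberField K]
  (𝔮 : HeightOneSpectrum (NumberField.RingOfIntegers K))

theorem ordAt_eq_neg_log_valuation (x : K) :
    ordAt 𝔮 x = -WithZero.log (𝔮.valuation K x) := by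
  by_cases hx : x = 0
  · simp [ordAt, hx]
  · rw [ordAt, dif_neg hx]
    exact congrArg (- WithZero.log ·) (WithZero.coe_unzero _)

theorem ordAt_eq_of_valuation_eq {x y : K} (h : 𝔮.valuation K x = 𝔮.valuation K y) :
    ordAt 𝔮 x = ordAt 𝔮 y := by
  rw [ordAt_eq_neg_log_valuation, ordAt_eq_neg_log_valuation, h]

theorem ordAt_mul_pow_cast_eq {k : ℕ} (x : K) {y : K} (hy : y ≠ 0) :
    (ordAt 𝔮 (x * y ^ k) : ZMod k) = ordAt 𝔮 x := by
  by_cases hx : x = 0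
  · simp [hx]
  have hvx : 𝔮.valuation K x ≠ 0 := ((𝔮.valuation K).ne_zero_iff).mpr hx
  have hvy : 𝔮.valuation K (y ^ k) ≠ 0 := ((𝔮.valuation K).ne_zero_iff).mpr (pow_ne_zero k hy)
  rw [ordAt_eq_neg_log_valuation, ordAt_eq_neg_log_valuation, map_mul, WithZero.log_mul hvx hvy,
    map_pow, WithZero.log_pow]
  push_cast
  simp

theorem ordAt_cast_eq_or_eq_or_eq_of_add_eq {k : ℕ} {a b c x y z : K}
    (hx : x ≠ 0) (hy : y ≠ 0) (hz : z ≠ 0) (h : a * x ^ k + b * y ^ k = c * z ^ k) :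
    (ordAt 𝔮 a : ZMod k) = ordAt 𝔮 b ∨ (ordAt 𝔮 a : ZMod k) = ordAt 𝔮 c ∨
      (ordAt 𝔮 b : ZMod k) = ordAt 𝔮 c := by
  rw [← ordAt_mul_pow_cast_eq 𝔮 a hx, ← ordAt_mul_pow_cast_eq 𝔮 b hy,
    ← ordAt_mul_pow_cast_eq 𝔮 c hz]
  rcases (𝔮.valuation K).eq_or_eq_or_eq_of_add_eq h with e | e | e
  · exact Or.inl (congrArg _ (ordAt_eq_of_valuation_eq 𝔮 e))
  · exact Or.inr (Or.inl (congrArg _ (ordAt_eq_of_valuation_eq 𝔮 e)))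
  · exact Or.inr (Or.inr (congrArg _ (ordAt_eq_of_valuation_eq 𝔮 e)))

end ordAt

theorem valuative_criterion_general
    (K : Type) [Field K] [NumberField K]
    (s : K)
    (conj : K ≃ₐ[ℚ] K) (hconj : conj s = -s)
    (p : ℕ)
    (v n : ℤ)
    (ε : K)
    (𝔮 : HeightOneSpectrum (NumberField.RingOfIntegers K))
    (h : -- (i)
      ((ordAt 𝔮 (v : K) : ZMod p) ≠ (ordAt 𝔮 ((n : K) * s) : ZMod p) ∧
       (ordAt 𝔮 (v : K) : ZMod p) ≠ (ordAt 𝔮 ε : ZMod p) ∧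
       (ordAt 𝔮 ((n : K) * s) : ZMod p) ≠ (ordAt 𝔮 ε : ZMod p)) ∨
      -- (ii)
      ((ordAt 𝔮 ((2 * v : ℤ) : K) : ZMod p) ≠ (ordAt 𝔮 ε : ZMod p) ∧
       (ordAt 𝔮 ((2 * v : ℤ) : K) : ZMod p) ≠ (ordAt 𝔮 (conj ε) : ZMod p) ∧
       (ordAt 𝔮 ε : ZMod p) ≠ (ordAt 𝔮 (conj ε) : ZMod p)) ∨
      -- (iii)
      ((ordAt 𝔮 (2 * (n : K) * s) : ZMod p) ≠ (ordAt 𝔮 ε : ZMod p) ∧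
       (ordAt 𝔮 (2 * (n : K) * s) : ZMod p) ≠ (ordAt 𝔮 (conj ε) : ZMod p) ∧
       (ordAt 𝔮 ε : ZMod p) ≠ (ordAt 𝔮 (conj ε) : ZMod p))) :
    ¬ ∃ (σ : ℤ) (η : K), σ ≠ 0 ∧ η ≠ 0 ∧
      (v : K) * (σ : K) ^ p + (n : K) * s = ε * η ^ p := by
  rintro ⟨σ, η, hσ, hη, heq⟩
  have hσ' : (σ : K) ≠ 0 := Int.cast_ne_zero.mpr hσ
  have hη' : conj η ≠ 0 := (map_ne_zero conj).mpr hη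
  have heq' : (v : K) * (σ : K) ^ p - (n : K) * s = conj ε * conj η ^ p := by
    simpa [hconj, sub_eq_add_neg] using congrArg conj heq
  rcases h with ⟨h₁, h₂, h₃⟩ | ⟨h₁, h₂, h₃⟩ | ⟨h₁, h₂, h₃⟩
  · have hsum : (v : K) * (σ : K) ^ p + (n * s) * 1 ^ p = ε * η ^ p := by
      rw [one_pow, mul_one, heq]
    rcases ordAt_cast_eq_or_eq_or_eq_of_add_eq 𝔮 hσ' one_ne_zero hη hsum with e | e | e
    exacts [h₁ e, h₂ e, h₃ e]
  · have hsum : ε * η ^ p + conj ε * conj η ^ p = ((2 * v : ℤ) : K) * (σ : K) ^ p := by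
      push_cast
      linear_combination -heq - heq'
    rcases ordAt_cast_eq_or_eq_or_eq_of_add_eq 𝔮 hη hη' hσ' hsum with e | e | e
    exacts [h₃ e, h₁ e.symm, h₂ e.symm]
  · have hsum : 2 * n * s * 1 ^ p + conj ε * conj η ^ p = ε * η ^ p := by
      linear_combination heq - heq'
    rcases ordAt_cast_eq_or_eq_or_eq_of_add_eq 𝔮 one_ne_zero hη' hη hsum with e | e | e
    exacts [h₂ e, h₁ e, h₃ e.symm]

theorem valuative_criterion
    (m : ℕ) (hm : 0 < m) (hmsq : Squarefree m)
    (K : Type) [Field K] [NumberField K] (hdeg : Module.finrank ℚ K = 2)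
    (s : K) (hs : s ^ 2 = -(m : K))
    (conj : K ≃ₐ[ℚ] K) (hconj : conj s = -s)
    (p : ℕ) (hp : p.Prime) (hpodd : Odd p)
    (v n : ℤ) (hv : v ≠ 0) (hn : n ≠ 0)
    (ε : K) (hε : ε ≠ 0)
    (𝔮 : HeightOneSpectrum (NumberField.RingOfIntegers K))
    (h : -- (i)
      ((ordAt 𝔮 (v : K) : ZMod p) ≠ (ordAt 𝔮 ((n : K) * s) : ZMod p) ∧
       (ordAt 𝔮 (v : K) : ZMod p) ≠ (ordAt 𝔮 ε : ZMod p) ∧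
       (ordAt 𝔮 ((n : K) * s) : ZMod p) ≠ (ordAt 𝔮 ε : ZMod p)) ∨
      -- (ii)
      ((ordAt 𝔮 ((2 * v : ℤ) : K) : ZMod p) ≠ (ordAt 𝔮 ε : ZMod p) ∧
       (ordAt 𝔮 ((2 * v : ℤ) : K) : ZMod p) ≠ (ordAt 𝔮 (conj ε) : ZMod p) ∧
       (ordAt 𝔮 ε : ZMod p) ≠ (ordAt 𝔮 (conj ε) : ZMod p)) ∨
      -- (iii)
      ((ordAt 𝔮 (2 * (n : K) * s) : ZMod p) ≠ (ordAt 𝔮 ε : ZMod p) ∧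
       (ordAt 𝔮 (2 * (n : K) * s) : ZMod p) ≠ (ordAt 𝔮 (conj ε) : ZMod p) ∧
       (ordAt 𝔮 ε : ZMod p) ≠ (ordAt 𝔮 (conj ε) : ZMod p))) :
    ¬ ∃ (σ : ℤ) (η : K), σ ≠ 0 ∧ η ≠ 0 ∧
      (v : K) * (σ : K) ^ p + (n : K) * s = ε * η ^ p :=
  valuative_criterion_general K s conj hconj p v n ε 𝔮 h
end

section
/- Let $m$ be a squarefree positive integer, $K = \mathbb{Q}(\sqrt{-m})$ with ring of integers $\mathcal{O}$, let $p$ be an odd prime, let $v, n$ be nonzero integers and $\epsilon \in \mathcal{O}$. Let $q = 2kp+1$ be a prime (with $k$ a positive integer) such that $q\mathcal{O} = \mathfrak{q}_1\mathfrak{q}_2$ with $\mathfrak{q}_1, \mathfrak{q}_2$ distinct prime ideals, and such that $\mathrm{ord}_{\mathfrak{q}_j}(\epsilon) = 0$ for $j = 1, 2$. Let $\chi(p,q) = \{\eta^p : \eta \in \mathbb{F}_q\}$ and $C(p,q) = \{\zeta \in \chi(p,q) : ((v\zeta + n\sqrt{-m})/\epsilon)^{2k} \equiv 0 \text{ or }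 1 \pmod{\mathfrak{q}_j} \text{ for } j = 1, 2\}$. If $C(p,q) = \emptyset$, then there is no integer $\sigma$ and no $\eta \in K$ satisfying $v\sigma^p + n\sqrt{-m} = \epsilon\eta^p$. -/
/-!
Suppose `v σ^p + n √-m = ε η^p`, and put `w = v σ^p + n √-m`. Then `a = ε η` has `a^p = ε^(p-1) w`,
so `a` is integral and `w ε^p = ε a^p` holds in `𝓞`. Because `q𝓞` splits into two primes in a
quadratic field, each residue field `𝓞/𝔮ⱼ` has `q = 2kp + 1` elements, so raising to the power `2k`
turns every `p`-th power into `0` or `1` (Fermat), giving `w^(2k) ≡ 0` or `ε^(2k)` modulo `𝔮ⱼ`.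
Since `σ^p ≡ ζ` modulo `q` for `ζ = (σ mod q)^p ∈ χ(p,q)`, this `ζ` would lie in `C(p,q)`.
-/

open NumberField

theorem pow_eq_zero_or_eq_of_mul_pow_eq_mul_pow {F : Type*} [Field F] [Finite F] {k p : ℕ}
    (hcard : Nat.card F = 2 * k * p + 1) {w ε a b : F} (hb : b ≠ 0)
    (h : w * b ^ p = ε * a ^ p) :
    w ^ (2 * k) = 0 ∨ w ^ (2 * k) = ε ^ (2 * k) := by
  have fermat : ∀ x : F, x ≠ 0 → x ^ (2 * k * p) = 1 := by
    cases nonempty_fintype F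
    intro x hx
    have := FiniteField.pow_card_sub_one_eq_one x hx
    rwa [← Nat.card_eq_fintype_card, hcard, Nat.add_sub_cancel] at this
  have key : w ^ (2 * k) = ε ^ (2 * k) * a ^ (2 * k * p) := calc
    w ^ (2 * k) = (w * b ^ p) ^ (2 * k) := by
      rw [mul_pow, ← pow_mul, mul_comm p, fermat b hb, mul_one]
    _ = ε ^ (2 * k) * a ^ (2 * k * p) := by rw [h]; ring
  have ha : a ^ (2 * k * p) = 0 ∨ a ^ (2 * k * p) = 1 := by
    rcases eq_or_ne a 0 with rfl | ha
    · rw [zero_pow_eq]; split_ifs <;> simp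
    · exact .inr (fermat a ha)
  rcases ha with ha | ha <;> simp [key, ha]

theorem IsIntegrallyClosed.exists_mul_pow_eq_mul_pow {R K : Type*} [CommRing R] [CommRing K]
    [Algebra R K] [IsFractionRing R K] [IsIntegrallyClosed R] {p : ℕ} (hp : 0 < p)
    {w ε : R} {η : K} (h : algebraMap R K w = algebraMap R K ε * η ^ p) :
    ∃ a : R, w * ε ^ p = ε * a ^ p := by
  have hint : IsIntegral R ((algebraMap R K ε * η) ^ p) := by
    have : (algebraMap R K ε * η) ^ p = algebraMap R K (ε ^ (p - 1) * w) := by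
      rw [map_mul, h, map_pow, mul_pow, ← mul_assoc, ← pow_succ, Nat.sub_add_cancel hp]
    rw [this]
    exact isIntegral_algebraMap
  obtain ⟨a, ha⟩ := exists_algebraMap_eq_of_isIntegral_pow hp hint
  refine ⟨a, IsFractionRing.injective R K ?_⟩
  simp only [map_mul, map_pow, ha, h]
  ring

theorem Ideal.Quotient.mk_natCast_val_intCast {R : Type*} [CommRing R] {I : Ideal R} {q : ℕ}
    [NeZero q] (hq : (q : R) ∈ I) (z : ℤ) :
    mk I (((z : ZMod q).val : ℕ) : R) = mk I (z : R) := by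
  rw [Ideal.Quotient.eq, ← Int.cast_natCast, ZMod.val_intCast, Int.emod_def]
  push_cast
  simpa using I.mul_mem_right (-(z / q : ℤ) : R) hq

theorem NumberField.absNorm_eq_of_span_natCast_eq_mul {K : Type*} [Field K] [NumberField K]
    (hdeg : Module.finrank ℚ K = 2) {q : ℕ} (hq : q.Prime) {P Q : Ideal (𝓞 K)}
    (hP : P ≠ ⊤) (hQ : Q ≠ ⊤) (hsplit : Ideal.span {(q : 𝓞 K)} = P * Q) :
    Ideal.absNorm P = q := by
  have hnorm : Ideal.absNorm P * Ideal.absNorm Q = q ^ 2 := by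
    rw [← map_mul, ← hsplit, Ideal.absNorm_span_natCast, RingOfIntegers.rank, hdeg]
  exact ((hq.mul_eq_prime_sq_iff (mt Ideal.absNorm_eq_one_iff.mp hP)
    (mt Ideal.absNorm_eq_one_iff.mp hQ)).mp hnorm).1

theorem Ideal.Quotient.mk_pow_eq_zero_or_eq_of_mul_pow_eq_mul_pow {R : Type*} [CommRing R]
    {𝔮 : Ideal R} [𝔮.IsMaximal] {k p : ℕ} (hcard : Nat.card (R ⧸ 𝔮) = 2 * k * p + 1)
    {w ε a : R} (hε : ε ∉ 𝔮) (h : w * ε ^ p = ε * a ^ p) :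
    mk 𝔮 (w ^ (2 * k)) = 0 ∨ mk 𝔮 (w ^ (2 * k)) = mk 𝔮 (ε ^ (2 * k)) := by
  let := Ideal.Quotient.field 𝔮
  have : Finite (R ⧸ 𝔮) := Nat.finite_of_card_ne_zero (by omega)
  simp only [map_pow]
  refine pow_eq_zero_or_eq_of_mul_pow_eq_mul_pow hcard (b := mk 𝔮 ε) (a := mk 𝔮 a) ?_ ?_
  · rwa [Ne, Ideal.Quotient.eq_zero_iff_mem]
  · simp only [← map_pow, ← map_mul, h]

theorem further_descent_criterion_general
    (K : Type) [Field K] [NumberField K] (hdeg : Module.finrank ℚ K = 2)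
    (s : NumberField.RingOfIntegers K)
    (p : ℕ) (hp : p.Prime)
    (k : ℕ) (q : ℕ) (hq : q.Prime) (hqform : q = 2 * k * p + 1)
    (v n : ℤ)
    (ε : NumberField.RingOfIntegers K)
    (𝔮₁ 𝔮₂ : Ideal (NumberField.RingOfIntegers K))
    (h𝔮₁ : 𝔮₁.IsMaximal) (h𝔮₂ : 𝔮₂.IsMaximal)
    (hsplit : Ideal.span {(q : NumberField.RingOfIntegers K)} = 𝔮₁ * 𝔮₂)
    (hε₁ : ε ∉ 𝔮₁) (hε₂ : ε ∉ 𝔮₂)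
    (hC : {ζ : ZMod q | (∃ η : ZMod q, ζ = η ^ p) ∧
        ∀ 𝔮 ∈ ({𝔮₁, 𝔮₂} : Set (Ideal (NumberField.RingOfIntegers K))),
          Ideal.Quotient.mk 𝔮
              (((v : NumberField.RingOfIntegers K) * ((ζ.val : ℕ) : NumberField.RingOfIntegers K) +
                (n : NumberField.RingOfIntegers K) * s) ^ (2 * k)) = 0 ∨
          Ideal.Quotient.mk 𝔮
              (((v : NumberField.RingOfIntegers K) * ((ζ.val : ℕ) : NumberField.RingOfIntegers K) +
                (n : NumberField.RingOfIntegers K) * s) ^ (2 * k)) =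
            Ideal.Quotient.mk 𝔮 (ε ^ (2 * k))} = ∅) :
    ¬ ∃ (σ : ℤ) (η : K),
      (v : K) * (σ : K) ^ p + (n : K) * (s : K) = (ε : K) * η ^ p := by
  rintro ⟨σ, η, heq⟩
  have : NeZero q := ⟨hq.ne_zero⟩
  set w : 𝓞 K := v * σ ^ p + n * s
  obtain ⟨a, ha⟩ := IsIntegrallyClosed.exists_mul_pow_eq_mul_pow (K := K) hp.pos
    (w := w) (ε := ε) (η := η) (by simpa [w] using heq)
  have hq_mem : (q : 𝓞 K) ∈ 𝔮₁ * 𝔮₂ := hsplit ▸ Ideal.mem_span_singleton_self _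
  have residue (𝔮 : Ideal (𝓞 K)) [𝔮.IsMaximal] (hnorm : Ideal.absNorm 𝔮 = q)
      (hq𝔮 : (q : 𝓞 K) ∈ 𝔮) (hε : ε ∉ 𝔮) :
      Ideal.Quotient.mk 𝔮 ((v * ((((σ : ZMod q) ^ p).val : ℕ) : 𝓞 K) + n * s) ^ (2 * k)) = 0 ∨
      Ideal.Quotient.mk 𝔮 ((v * ((((σ : ZMod q) ^ p).val : ℕ) : 𝓞 K) + n * s) ^ (2 * k)) =
        Ideal.Quotient.mk 𝔮 (ε ^ (2 * k)) := by
    have hw : Ideal.Quotient.mk 𝔮 (v * ((((σ : ZMod q) ^ p).val : ℕ) : 𝓞 K) + n * s) =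
        Ideal.Quotient.mk 𝔮 w := by
      rw [← Int.cast_pow, map_add, map_mul, Ideal.Quotient.mk_natCast_val_intCast hq𝔮]
      push_cast
      rfl
    rw [map_pow, hw, ← map_pow]
    refine Ideal.Quotient.mk_pow_eq_zero_or_eq_of_mul_pow_eq_mul_pow ?_ hε ha
    rw [← Submodule.cardQuot_apply, ← Ideal.absNorm_apply, hnorm, hqform]
  refine Set.eq_empty_iff_forall_notMem.mp hC ((σ : ZMod q) ^ p) ⟨⟨σ, rfl⟩, ?_⟩
  rintro 𝔮 (rfl | rfl)
  · exact residue 𝔮 (absNorm_eq_of_span_natCast_eq_mul hdeg hq h𝔮₁.ne_top h𝔮₂.ne_top hsplit)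
      (Ideal.mul_le_left hq_mem) hε₁
  · exact residue 𝔮 (absNorm_eq_of_span_natCast_eq_mul hdeg hq h𝔮₂.ne_top h𝔮₁.ne_top
      (hsplit.trans (mul_comm _ _))) (Ideal.mul_le_right hq_mem) hε₂

theorem further_descent_criterion
    (m : ℕ) (hm : 0 < m) (hmsq : Squarefree m)
    (K : Type) [Field K] [NumberField K] (hdeg : Module.finrank ℚ K = 2)
    (s : NumberField.RingOfIntegers K) (hs : s ^ 2 = -(m : NumberField.RingOfIntegers K))
    (p : ℕ) (hp : p.Prime) (hpodd : Odd p)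
    (k : ℕ) (hk : 0 < k) (q : ℕ) (hq : q.Prime) (hqform : q = 2 * k * p + 1)
    (v n : ℤ) (hv : v ≠ 0) (hn : n ≠ 0)
    (ε : NumberField.RingOfIntegers K)
    (𝔮₁ 𝔮₂ : Ideal (NumberField.RingOfIntegers K))
    (h𝔮₁ : 𝔮₁.IsMaximal) (h𝔮₂ : 𝔮₂.IsMaximal) (hne : 𝔮₁ ≠ 𝔮₂)
    (hsplit : Ideal.span {(q : NumberField.RingOfIntegers K)} = 𝔮₁ * 𝔮₂)
    (hε₁ : ε ∉ 𝔮₁) (hε₂ : ε ∉ 𝔮₂)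
    (hC : {ζ : ZMod q | (∃ η : ZMod q, ζ = η ^ p) ∧
        ∀ 𝔮 ∈ ({𝔮₁, 𝔮₂} : Set (Ideal (NumberField.RingOfIntegers K))),
          Ideal.Quotient.mk 𝔮
              (((v : NumberField.RingOfIntegers K) * ((ζ.val : ℕ) : NumberField.RingOfIntegers K) +
                (n : NumberField.RingOfIntegers K) * s) ^ (2 * k)) = 0 ∨
          Ideal.Quotient.mk 𝔮
              (((v : NumberField.RingOfIntegers K) * ((ζ.val : ℕ) : NumberField.RingOfIntegers K) +
                (n : NumberField.RingOfIntegers K) * s) ^ (2 * k)) =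
            Ideal.Quotient.mk 𝔮 (ε ^ (2 * k))} = ∅) :
    ¬ ∃ (σ : ℤ) (η : K),
      (v : K) * (σ : K) ^ p + (n : K) * (s : K) = (ε : K) * η ^ p :=
  further_descent_criterion_general K hdeg s p hp k q hq hqform v n ε 𝔮₁ 𝔮₂ h𝔮₁ h𝔮₂ hsplit hε₁ hε₂
    hC
end

section
/- (Case 1 descent) Let $p \ge 5$ be a prime and let $x, r, y$ be integers with $\gcd(x,r) = 1$, $r \ge 1$, satisfying $(x-3r)^3+(x-2r)^3+(x-r)^3+x^3+(x+r)^3+(x+2r)^3+(x+3r)^3 = y^p$. Suppose $7 \nmid x$, $2 \nmid x$ and $3 \nmid x$. Then there exist integers $w_1, w_2$ with $x = w_1^p$, $x^2 + 12r^2 = 7^{p-1} w_2^p$, and consequently $7^{p-1} w_2^p - w_1^{2p} = 12 r^2$. -/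
/-! The sum of the seven cubes is `7 x (x² + 12 r²)`, so `7 ∣ y` and `x (x² + 12 r²) = 7^(p-1) w^p`.
The two factors on the left are coprime and `7 ∤ x`, so `7^(p-1)` divides `x² + 12 r²`; after removing
it, `x` and the cofactor are coprime with product a `p`-th power, hence both are `p`-th powers because
`p` is odd. -/

lemma sum_seven_cubes_arith_progression (x r : ℤ) :
    (x - 3 * r) ^ 3 + (x - 2 * r) ^ 3 + (x - r) ^ 3 + x ^ 3 +
      (x + r) ^ 3 + (x + 2 * r) ^ 3 + (x + 3 * r) ^ 3 = 7 * (x * (x ^ 2 + 12 * r ^ 2)) := by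
  ring

lemma exists_eq_prime_pow_mul_pow_of_prime_mul_eq_pow {q n y : ℤ} (hq : Prime q) {p : ℕ}
    (hp : 1 ≤ p) (h : q * n = y ^ p) : ∃ w, n = q ^ (p - 1) * w ^ p := by
  obtain ⟨w, rfl⟩ : q ∣ y := hq.dvd_of_dvd_pow ⟨n, h.symm⟩
  refine ⟨w, mul_left_cancel₀ hq.ne_zero ?_⟩
  rw [h, mul_pow, ← mul_assoc, ← pow_succ', Nat.sub_add_cancel hp]

lemma isCoprime_sq_add_mul_sq {x r c : ℤ} (hxr : IsCoprime x r) (hxc : IsCoprime x c) :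
    IsCoprime x (x ^ 2 + c * r ^ 2) := by
  simpa [sq, add_comm] using (hxc.mul_right (hxr.pow_right (n := 2))).add_mul_left_right x

lemma isCoprime_twelve_of_not_dvd {x : ℤ} (h2 : ¬ 2 ∣ x) (h3 : ¬ 3 ∣ x) : IsCoprime x 12 := by
  have hx2 : IsCoprime x 2 := (Int.prime_two.coprime_iff_not_dvd.mpr h2).symm
  have hx3 : IsCoprime x 3 := (Int.prime_three.coprime_iff_not_dvd.mpr h3).symm
  simpa using (hx2.pow_right (n := 2)).mul_right hx3

lemma exists_pow_of_mul_eq_prime_pow_mul_pow_odd {x B q w : ℤ} {k p : ℕ} (hq : Prime q)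
    (hqx : ¬ q ∣ x) (hp : Odd p) (hxB : IsCoprime x B) (h : x * B = q ^ k * w ^ p) :
    ∃ w₁ w₂, x = w₁ ^ p ∧ B = q ^ k * w₂ ^ p := by
  have hqk : IsCoprime (q ^ k) x := (hq.coprime_iff_not_dvd.mpr hqx).pow_left
  obtain ⟨C, rfl⟩ : q ^ k ∣ B := hqk.dvd_of_dvd_mul_left ⟨w ^ p, h⟩
  have hxC : x * C = w ^ p :=
    mul_left_cancel₀ (pow_ne_zero k hq.ne_zero) (by rw [← h]; ring)
  obtain ⟨⟨w₁, hw₁⟩, ⟨w₂, hw₂⟩⟩ :=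
    Int.eq_pow_of_mul_eq_pow_odd (hxB.of_isCoprime_of_dvd_right (dvd_mul_left C _)) hp hxC
  exact ⟨w₁, w₂, hw₁, by rw [hw₂]⟩

theorem case1_descent_general
    (p : ℕ) (hp : p.Prime) (hp5 : 5 ≤ p)
    (x r y : ℤ) (hgcd : Int.gcd x r = 1)
    (heq : (x - 3 * r) ^ 3 + (x - 2 * r) ^ 3 + (x - r) ^ 3 + x ^ 3 +
      (x + r) ^ 3 + (x + 2 * r) ^ 3 + (x + 3 * r) ^ 3 = y ^ p)
    (h7 : ¬ (7 : ℤ) ∣ x) (h2 : ¬ (2 : ℤ) ∣ x) (h3 : ¬ (3 : ℤ) ∣ x) :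
    ∃ w₁ w₂ : ℤ, x = w₁ ^ p ∧ x ^ 2 + 12 * r ^ 2 = 7 ^ (p - 1) * w₂ ^ p ∧
      7 ^ (p - 1) * w₂ ^ p - w₁ ^ (2 * p) = 12 * r ^ 2 := by
  have h7prime : Prime (7 : ℤ) := by norm_num
  rw [sum_seven_cubes_arith_progression] at heq
  obtain ⟨w, hw⟩ := exists_eq_prime_pow_mul_pow_of_prime_mul_eq_pow h7prime (by omega) heq
  have hcop : IsCoprime x (x ^ 2 + 12 * r ^ 2) :=
    isCoprime_sq_add_mul_sq (Int.isCoprime_iff_gcd_eq_one.mpr hgcd)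
      (isCoprime_twelve_of_not_dvd h2 h3)
  obtain ⟨w₁, w₂, hw₁, hw₂⟩ := exists_pow_of_mul_eq_prime_pow_mul_pow_odd
    h7prime h7 (hp.odd_of_ne_two (by omega)) hcop hw
  refine ⟨w₁, w₂, hw₁, hw₂, ?_⟩
  rw [← hw₂, mul_comm 2 p, pow_mul, ← hw₁]
  ring

theorem case1_descent
    (p : ℕ) (hp : p.Prime) (hp5 : 5 ≤ p)
    (x r y : ℤ) (hgcd : Int.gcd x r = 1) (hr : 1 ≤ r)
    (heq : (x - 3 * r) ^ 3 + (x - 2 * r) ^ 3 + (x - r) ^ 3 + x ^ 3 +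
      (x + r) ^ 3 + (x + 2 * r) ^ 3 + (x + 3 * r) ^ 3 = y ^ p)
    (h7 : ¬ (7 : ℤ) ∣ x) (h2 : ¬ (2 : ℤ) ∣ x) (h3 : ¬ (3 : ℤ) ∣ x) :
    ∃ w₁ w₂ : ℤ, x = w₁ ^ p ∧ x ^ 2 + 12 * r ^ 2 = 7 ^ (p - 1) * w₂ ^ p ∧
      7 ^ (p - 1) * w₂ ^ p - w₁ ^ (2 * p) = 12 * r ^ 2 :=
  case1_descent_general p hp hp5 x r y hgcd heq h7 h2 h3
end

section
/- (Case 3 descent) Let $p \ge 5$ be a prime and let $x, r, y$ be integers with $\gcd(x,r) = 1$, $r \ge 1$, satisfying $(x-3r)^3+(x-2r)^3+(x-r)^3+x^3+(x+r)^3+(x+2r)^3+(x+3r)^3 = y^p$. Suppose $7 \nmid x$, $4 \mid x$ and $3 \nmid x$. Then there exist integers $w_1, w_2$ with $x = 2^{p-2} w_1^p$, $x^2 + 12r^2 = 4 \cdot 7^{p-1} w_2^p$, and consequently $7^{p-1} w_2^p - 2^{2p-6} w_1^{2p} = 3 r^2$. -/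
theorem case3_descent
    (p : ℕ) (hp : p.Prime) (hp5 : 5 ≤ p)
    (x r y : ℤ) (hgcd : Int.gcd x r = 1) (hr : 1 ≤ r)
    (heq : (x - 3 * r) ^ 3 + (x - 2 * r) ^ 3 + (x - r) ^ 3 + x ^ 3 +
      (x + r) ^ 3 + (x + 2 * r) ^ 3 + (x + 3 * r) ^ 3 = y ^ p)
    (h7 : ¬ (7 : ℤ) ∣ x) (h4 : (4 : ℤ) ∣ x) (h3 : ¬ (3 : ℤ) ∣ x) :
    ∃ w₁ w₂ : ℤ, x = 2 ^ (p - 2) * w₁ ^ p ∧ x ^ 2 + 12 * r ^ 2 = 4 * 7 ^ (p - 1) * w₂ ^ p ∧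
      7 ^ (p - 1) * w₂ ^ p - 2 ^ (2 * p - 6) * w₁ ^ (2 * p) = 3 * r ^ 2 := by
  have hodd : Odd p := hp.odd_of_ne_two (by omega)
  have h7p : Prime (7 : ℤ) := by norm_num
  have h2p : Prime (2 : ℤ) := Int.prime_two
  have h3p : Prime (3 : ℤ) := Int.prime_three
  -- rewrite the sum
  have h1 : 7 * (x * (x ^ 2 + 12 * r ^ 2)) = y ^ p := by linear_combination heq
  -- 7 ∣ y
  have h7y : (7 : ℤ) ∣ y := h7p.dvd_of_dvd_pow (n := p) ⟨_, h1.symm⟩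
  obtain ⟨w, rfl⟩ := h7y
  have hpe : p - 1 + 1 = p := by omega
  have h2 : x * (x ^ 2 + 12 * r ^ 2) = 7 ^ (p - 1) * w ^ p := by
    have : (7:ℤ) * (x * (x ^ 2 + 12 * r ^ 2)) = 7 * (7 ^ (p - 1) * w ^ p) := by
      rw [h1, mul_pow, ← mul_assoc, ← pow_succ', hpe]
    exact mul_left_cancel₀ (by norm_num) this
  obtain ⟨a, rfl⟩ := h4
  set b : ℤ := 4 * a ^ 2 + 3 * r ^ 2 with hb
  have h3b : (4 * a) ^ 2 + 12 * r ^ 2 = 4 * b := by rw [hb]; ring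
  have h16 : (16 * a) * b = 7 ^ (p - 1) * w ^ p := by
    rw [← h2, h3b]; ring
  -- coprimality of x and r, oddness of r
  have hxr : IsCoprime (4 * a) r := Int.isCoprime_iff_gcd_eq_one.mpr hgcd
  have har : IsCoprime a r := hxr.of_isCoprime_of_dvd_left ⟨4, mul_comm 4 a⟩
  have hro : ¬ (2 : ℤ) ∣ r := by
    intro h
    have h2x : (2 : ℤ) ∣ 4 * a := ⟨2 * a, by ring⟩
    have hu := hxr.isUnit_of_dvd' h2x h
    rw [Int.isUnit_iff] at hu
    omega
  have hbodd : ¬ (2 : ℤ) ∣ b := by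
    intro h
    have h3r : (2 : ℤ) ∣ 3 * r ^ 2 := (dvd_add_right ⟨2 * a ^ 2, by ring⟩).mp h
    rcases h2p.dvd_mul.mp h3r with h' | h'
    · norm_num at h'
    · exact hro (h2p.dvd_of_dvd_pow h')
  -- coprimality of a and b
  have h3a : ¬ (3 : ℤ) ∣ a := fun h => h3 (h.mul_left 4)
  have hab : IsCoprime a b := by
    have h1' : IsCoprime a (3 * r ^ 2) :=
      ((h3p.coprime_iff_not_dvd.mpr h3a).symm.mul_right (har.pow_right))
    have : IsCoprime a (3 * r ^ 2 + a * (4 * a)) := h1'.add_mul_left_right _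
    have e : 3 * r ^ 2 + a * (4 * a) = b := by rw [hb]; ring
    rwa [e] at this
  -- 7^(p-1) ∣ b
  have h7a : ¬ (7 : ℤ) ∣ 16 * a := by
    intro h
    rcases h7p.dvd_mul.mp h with h' | h'
    · norm_num at h'
    · exact h7 (h'.mul_left 4)
  have h7b : (7 : ℤ) ^ (p - 1) ∣ b := by
    have hcp : IsCoprime ((7 : ℤ) ^ (p - 1)) (16 * a) :=
      (h7p.coprime_iff_not_dvd.mpr h7a).pow_left
    exact hcp.dvd_of_dvd_mul_left ⟨w ^ p, h16⟩
  obtain ⟨c, hc⟩ := h7b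
  have h7ne : ((7 : ℤ) ^ (p - 1)) ≠ 0 := pow_ne_zero _ (by norm_num)
  have h16ac : (16 * a) * c = w ^ p := by
    have : (7 : ℤ) ^ (p - 1) * ((16 * a) * c) = 7 ^ (p - 1) * w ^ p := by
      rw [← h16, hc]; ring
    exact mul_left_cancel₀ h7ne this
  -- coprimality of 16a and c
  have hcb : c ∣ b := ⟨7 ^ (p - 1), by rw [hc]; ring⟩
  have hcodd : ¬ (2 : ℤ) ∣ c := fun h => hbodd (h.trans hcb)
  have hcop : IsCoprime (16 * a) c := by
    have h16c : IsCoprime (16 : ℤ) c := by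
      have : IsCoprime ((2 : ℤ) ^ 4) c := (h2p.coprime_iff_not_dvd.mpr hcodd).pow_left
      norm_num at this; exact this
    exact IsCoprime.mul_left h16c (hab.of_isCoprime_of_dvd_right hcb)
  obtain ⟨d, hd⟩ := Int.eq_pow_of_mul_eq_pow_odd_left hcop hodd h16ac
  obtain ⟨e, he⟩ := Int.eq_pow_of_mul_eq_pow_odd_right hcop hodd h16ac
  -- 2 ∣ d
  have h2d : (2 : ℤ) ∣ d := by
    have : (2 : ℤ) ∣ d ^ p := ⟨8 * a, by rw [← hd]; ring⟩
    exact h2p.dvd_of_dvd_pow this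
  obtain ⟨d₁, rfl⟩ := h2d
  refine ⟨d₁, e, ?_, ?_, ?_⟩
  · -- x = 2^(p-2) * d₁^p
    have e2 : (2 : ℤ) ^ p = 4 * 2 ^ (p - 2) := by
      have h := pow_add (2 : ℤ) (p - 2) 2
      rw [show p - 2 + 2 = p from by omega] at h
      rw [h]; ring
    have : (4 : ℤ) * (4 * a) = 4 * (2 ^ (p - 2) * d₁ ^ p) := by
      rw [show (4:ℤ) * (4*a) = 16 * a by ring, hd, mul_pow, e2]; ring
    exact mul_left_cancel₀ (by norm_num) this
  · rw [h3b, hc, he]; ring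
  · -- final identity
    have hx : (4 : ℤ) * (4 * a) = 4 * (2 ^ (p - 2) * d₁ ^ p) := by
      have e2 : (2 : ℤ) ^ p = 4 * 2 ^ (p - 2) := by
        have h := pow_add (2 : ℤ) (p - 2) 2
        rw [show p - 2 + 2 = p from by omega] at h
        rw [h]; ring
      rw [show (4:ℤ) * (4*a) = 16 * a by ring, hd, mul_pow, e2]; ring
    have hxv : (4 : ℤ) * a = 2 ^ (p - 2) * d₁ ^ p := mul_left_cancel₀ (by norm_num) hx
    have hsq : ((4 : ℤ) * a) ^ 2 = 4 * (2 ^ (2 * p - 6) * d₁ ^ (2 * p)) := by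
      have e3 : (2 : ℤ) ^ ((p - 2) * 2) = 4 * 2 ^ (2 * p - 6) := by
        have h := pow_add (2 : ℤ) (2 * p - 6) 2
        rw [show 2 * p - 6 + 2 = (p - 2) * 2 from by omega] at h
        rw [h]; ring
      rw [hxv, mul_pow, ← pow_mul, ← pow_mul, e3, show p * 2 = 2 * p from by omega]
      ring
    have h4eq : (4 * a) ^ 2 + 12 * r ^ 2 = 4 * (7 ^ (p - 1) * e ^ p) := by
      rw [h3b, hc, he]
    have : (4 : ℤ) * (7 ^ (p - 1) * e ^ p - 2 ^ (2 * p - 6) * d₁ ^ (2 * p)) =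
        4 * (3 * r ^ 2) := by linear_combination hsq - h4eq
    exact mul_left_cancel₀ (by norm_num) this
end

section
/- (Case 4 descent) Let $p \ge 5$ be a prime and let $x, r, y$ be integers with $\gcd(x,r) = 1$, $r \ge 1$, satisfying $(x-3r)^3+(x-2r)^3+(x-r)^3+x^3+(x+r)^3+(x+2r)^3+(x+3r)^3 = y^p$. Suppose $7 \nmid x$ and $12 \mid x$. Then there exist integers $w_1, w_2$ with $x = 2^{p-2} \cdot 3^{p-1} w_1^p$, $x^2 + 12r^2 = 12 \cdot 7^{p-1} w_2^p$, and consequently $7^{p-1} w_2^p - 2^{2p-6} \cdot 3^{2p-3} w_1^{2p} = r^2$. -/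
theorem case4_descent
    (p : ℕ) (hp : p.Prime) (hp5 : 5 ≤ p)
    (x r y : ℤ) (hgcd : Int.gcd x r = 1) (hr : 1 ≤ r)
    (heq : (x - 3 * r) ^ 3 + (x - 2 * r) ^ 3 + (x - r) ^ 3 + x ^ 3 +
      (x + r) ^ 3 + (x + 2 * r) ^ 3 + (x + 3 * r) ^ 3 = y ^ p)
    (h7 : ¬ (7 : ℤ) ∣ x) (h12 : (12 : ℤ) ∣ x) :
    ∃ w₁ w₂ : ℤ, x = 2 ^ (p - 2) * 3 ^ (p - 1) * w₁ ^ p ∧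
      x ^ 2 + 12 * r ^ 2 = 12 * 7 ^ (p - 1) * w₂ ^ p ∧
      7 ^ (p - 1) * w₂ ^ p - 2 ^ (2 * p - 6) * 3 ^ (2 * p - 3) * w₁ ^ (2 * p) = r ^ 2 := by
  have hodd : Odd p := hp.odd_of_ne_two (by omega)
  have hxr : IsCoprime x r := Int.isCoprime_iff_gcd_eq_one.mpr hgcd
  have hp7 : Prime (7 : ℤ) := by norm_num
  have hp2 : Prime (2 : ℤ) := Int.prime_two
  have hp3 : Prime (3 : ℤ) := Int.prime_three
  obtain ⟨a, ha⟩ := h12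
  have h2r : ¬ (2:ℤ) ∣ r := fun h => by
    have : IsUnit (2:ℤ) := hxr.isUnit_of_dvd' ⟨6*a, by rw [ha]; ring⟩ h
    rw [Int.isUnit_iff] at this; omega
  have h3r : ¬ (3:ℤ) ∣ r := fun h => by
    have : IsUnit (3:ℤ) := hxr.isUnit_of_dvd' ⟨4*a, by rw [ha]; ring⟩ h
    rw [Int.isUnit_iff] at this; omega
  have heq2 : 7 * (x * (x ^ 2 + 12 * r ^ 2)) = y ^ p := by linear_combination heq
  have h7y : (7:ℤ) ∣ y := hp7.dvd_of_dvd_pow (n := p) ⟨x * (x^2+12*r^2), heq2.symm⟩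
  obtain ⟨w, hw⟩ := h7y
  have hpsplit : p = (p - 1) + 1 := by omega
  have heq3 : x * (x ^ 2 + 12 * r ^ 2) = 7 ^ (p-1) * w ^ p := by
    have h7ne : (7:ℤ) ≠ 0 := by norm_num
    apply mul_left_cancel₀ h7ne
    calc 7 * (x * (x ^ 2 + 12 * r ^ 2)) = y ^ p := heq2
    _ = (7*w)^p := by rw [hw]
    _ = 7 * (7 ^ (p-1) * w ^ p) := by
        rw [mul_pow]; nth_rewrite 1 [hpsplit]; ring
  have heq4 : 144 * a * (12 * a ^ 2 + r ^ 2) = 7 ^ (p-1) * w ^ p := by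
    rw [← heq3, ha]; ring
  have h7a : ¬ (7:ℤ) ∣ 144 * a := by
    intro h
    rcases hp7.dvd_mul.mp h with h | h
    · norm_num at h
    · exact h7 (ha ▸ Dvd.dvd.mul_left h 12)
  have hcop7 : IsCoprime ((7:ℤ)^(p-1)) (144 * a) :=
    ((hp7.coprime_iff_not_dvd).mpr h7a).pow_left
  have h7B : (7:ℤ)^(p-1) ∣ (12 * a ^ 2 + r ^ 2) :=
    hcop7.dvd_of_dvd_mul_left ⟨w ^ p, heq4⟩
  obtain ⟨m, hm⟩ := h7B
  have heq5 : 144 * a * m = w ^ p := by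
    have h7ne : (7:ℤ)^(p-1) ≠ 0 := by positivity
    apply mul_left_cancel₀ h7ne
    linear_combination heq4 - (144 * a) * hm
  have h2B : ¬ (2:ℤ) ∣ (12 * a ^ 2 + r ^ 2) := by
    rintro ⟨c, hc⟩
    exact h2r (hp2.dvd_of_dvd_pow (show (2:ℤ) ∣ r^2 from ⟨c - 6*a^2, by linear_combination hc⟩))
  have h3B : ¬ (3:ℤ) ∣ (12 * a ^ 2 + r ^ 2) := by
    rintro ⟨c, hc⟩
    exact h3r (hp3.dvd_of_dvd_pow (show (3:ℤ) ∣ r^2 from ⟨c - 4*a^2, by linear_combination hc⟩))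
  have haB : IsCoprime a (12 * a ^ 2 + r ^ 2) := by
    have h1 : IsCoprime a (r^2) := (hxr.of_isCoprime_of_dvd_left ⟨12, by rw [ha]; ring⟩).pow_right
    have h2 := h1.add_mul_left_right (12 * a)
    rwa [show r^2 + a * (12 * a) = 12 * a ^ 2 + r ^ 2 by ring] at h2
  have hcopB : IsCoprime (144 * a) (12 * a ^ 2 + r ^ 2) := by
    have h2 : IsCoprime ((2:ℤ)^4) (12 * a ^ 2 + r ^ 2) := ((hp2.coprime_iff_not_dvd).mpr h2B).pow_left
    have h3 : IsCoprime ((3:ℤ)^2) (12 * a ^ 2 + r ^ 2) := ((hp3.coprime_iff_not_dvd).mpr h3B).pow_left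
    have h4 := (h2.mul_left h3).mul_left haB
    rwa [show (2:ℤ)^4 * 3^2 * a = 144 * a by ring] at h4
  have hcopm : IsCoprime (144 * a) m :=
    hcopB.of_isCoprime_of_dvd_right ⟨7^(p-1), by rw [hm]; ring⟩
  obtain ⟨s, hs⟩ := Int.eq_pow_of_mul_eq_pow_odd_left hcopm hodd heq5
  obtain ⟨t, ht⟩ := Int.eq_pow_of_mul_eq_pow_odd_right hcopm hodd heq5
  have h2s : (2:ℤ) ∣ s := hp2.dvd_of_dvd_pow (show (2:ℤ) ∣ s^p from ⟨72 * a, by rw [← hs]; ring⟩)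
  have h3s : (3:ℤ) ∣ s := hp3.dvd_of_dvd_pow (show (3:ℤ) ∣ s^p from ⟨48 * a, by rw [← hs]; ring⟩)
  obtain ⟨u, hu⟩ := h2s
  have h3u : (3:ℤ) ∣ u :=
    (hp3.coprime_iff_not_dvd.mpr (by norm_num)).dvd_of_dvd_mul_left (hu ▸ h3s)
  obtain ⟨w₁, hw₁⟩ := h3u
  have e2 : (2:ℤ)^p = 2^(p-2)*4 := by
    rw [show p = (p-2)+2 by omega]
    rw [show p - 2 + 2 - 2 = p - 2 by omega, pow_add]; norm_num
  have e3 : (3:ℤ)^p = 3^(p-1)*3 := by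
    rw [show p = (p-1)+1 by omega]
    rw [show p - 1 + 1 - 1 = p - 1 by omega, pow_add]; norm_num
  have hfirst : x = 2 ^ (p - 2) * 3 ^ (p - 1) * w₁ ^ p := by
    have key : (12:ℤ) * x = 12 * (2 ^ (p - 2) * 3 ^ (p - 1) * w₁ ^ p) := by
      calc (12:ℤ) * x = s ^ p := by rw [ha, ← hs]; ring
      _ = 2^p * 3^p * w₁^p := by rw [hu, hw₁, mul_pow, mul_pow]; ring
      _ = 12 * (2 ^ (p - 2) * 3 ^ (p - 1) * w₁ ^ p) := by rw [e2, e3]; ring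
    exact mul_left_cancel₀ (by norm_num) key
  have hsec : x ^ 2 + 12 * r ^ 2 = 12 * 7 ^ (p - 1) * t ^ p := by
    rw [ha]; linear_combination 12 * hm + (12 * 7^(p-1)) * ht
  have hx2 : x^2 = 12 * (2^(2*p-6)*3^(2*p-3)*w₁^(2*p)) := by
    rw [hfirst, mul_pow, mul_pow, ← pow_mul, ← pow_mul, ← pow_mul]
    rw [show (p-2)*2 = (2*p-6)+2 by omega, show (p-1)*2 = (2*p-3)+1 by omega,
      show p*2 = 2*p by omega, pow_add, pow_add]
    ring
  refine ⟨w₁, t, hfirst, hsec, mul_left_cancel₀ (show (12:ℤ) ≠ 0 by norm_num) ?_⟩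
  linear_combination hx2 - hsec
end

section
/- (Case 7 descent) Let $p \ge 5$ be a prime and let $x, r, y$ be integers with $\gcd(x,r) = 1$, $r \ge 1$, satisfying $(x-3r)^3+(x-2r)^3+(x-r)^3+x^3+(x+r)^3+(x+2r)^3+(x+3r)^3 = y^p$. Suppose $7 \mid x$, $2 \nmid x$ and $3 \nmid x$. Then there exist integers $w_1, w_2$ with $x = 7^{p-1} w_1^p$, $x^2 + 12r^2 = w_2^p$, and consequently $w_2^p - 7^{2p-2} w_1^{2p} = 12 r^2$. -/
theorem case7_descent
    (p : ℕ) (hp : p.Prime) (hp5 : 5 ≤ p)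
    (x r y : ℤ) (hgcd : Int.gcd x r = 1) (hr : 1 ≤ r)
    (heq : (x - 3 * r) ^ 3 + (x - 2 * r) ^ 3 + (x - r) ^ 3 + x ^ 3 +
      (x + r) ^ 3 + (x + 2 * r) ^ 3 + (x + 3 * r) ^ 3 = y ^ p)
    (h7 : (7 : ℤ) ∣ x) (h2 : ¬ (2 : ℤ) ∣ x) (h3 : ¬ (3 : ℤ) ∣ x) :
    ∃ w₁ w₂ : ℤ, x = 7 ^ (p - 1) * w₁ ^ p ∧ x ^ 2 + 12 * r ^ 2 = w₂ ^ p ∧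
      w₂ ^ p - 7 ^ (2 * p - 2) * w₁ ^ (2 * p) = 12 * r ^ 2 := by
  have hodd : Odd p := hp.odd_of_ne_two (by omega)
  have hp7 : Prime (7 : ℤ) := Int.prime_iff_natAbs_prime.mpr (by norm_num)
  have heq7 : 7 * (x * (x ^ 2 + 12 * r ^ 2)) = y ^ p := by linear_combination heq
  -- 7 ∣ y
  have h7y : (7 : ℤ) ∣ y := by
    have : (7 : ℤ) ∣ y ^ p := ⟨x * (x ^ 2 + 12 * r ^ 2), heq7.symm⟩
    exact hp7.dvd_of_dvd_pow this
  obtain ⟨w, rfl⟩ := h7y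
  have hp1 : p - 1 + 1 = p := Nat.succ_pred_eq_of_pos hp.pos
  have hkey : x * (x ^ 2 + 12 * r ^ 2) = 7 ^ (p - 1) * w ^ p := by
    have h7ne : (7 : ℤ) ≠ 0 := by norm_num
    apply mul_left_cancel₀ h7ne
    have h7p : (7:ℤ) ^ p = 7 * 7 ^ (p - 1) := by conv_lhs => rw [← hp1, pow_succ, mul_comm]
    rw [heq7, mul_pow, h7p]
    ring
  -- coprimality of x and x^2 + 12 r^2
  have hxr : IsCoprime x r := Int.isCoprime_iff_gcd_eq_one.mpr hgcd
  have hx2 : IsCoprime x 2 := ((Int.prime_two).coprime_iff_not_dvd.mpr h2).symm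
  have hx3 : IsCoprime x 3 := ((Int.prime_three).coprime_iff_not_dvd.mpr h3).symm
  have hx12 : IsCoprime x 12 := by
    have : (12 : ℤ) = 2 * 2 * 3 := by norm_num
    rw [this]
    exact (hx2.mul_right hx2).mul_right hx3
  have hcop : IsCoprime x (x ^ 2 + 12 * r ^ 2) := by
    have h1 : IsCoprime x (12 * r ^ 2) := hx12.mul_right (hxr.pow_right)
    have : x ^ 2 + 12 * r ^ 2 = 12 * r ^ 2 + x * x := by ring
    rw [this]
    exact h1.add_mul_left_right x
  -- 7 does not divide x^2 + 12 r^2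
  have h7v : ¬ (7 : ℤ) ∣ (x ^ 2 + 12 * r ^ 2) := by
    intro hdvd
    have h7r2 : (7 : ℤ) ∣ 12 * r ^ 2 := by
      have : (12 : ℤ) * r ^ 2 = (x ^ 2 + 12 * r ^ 2) - x * x := by ring
      rw [this]
      exact dvd_sub hdvd (h7.mul_right x)
    have h7r : (7 : ℤ) ∣ r := by
      rcases hp7.dvd_mul.mp h7r2 with h | h
      · norm_num at h
      · exact hp7.dvd_of_dvd_pow h
    have : IsUnit (7 : ℤ) := hxr.isUnit_of_dvd' h7 h7r
    exact hp7.not_unit this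
  -- 7^(p-1) divides x
  have h7px : (7 : ℤ) ^ (p - 1) ∣ x := by
    have hcop7 : IsCoprime ((7:ℤ) ^ (p-1)) (x ^ 2 + 12 * r ^ 2) :=
      (hp7.coprime_iff_not_dvd.mpr h7v).pow_left
    have : (7 : ℤ) ^ (p - 1) ∣ x * (x ^ 2 + 12 * r ^ 2) := ⟨w ^ p, hkey⟩
    exact hcop7.dvd_of_dvd_mul_right this
  obtain ⟨a, ha⟩ := h7px
  have h7pne : (7 : ℤ) ^ (p - 1) ≠ 0 := pow_ne_zero _ (by norm_num)
  have hkey2 : a * (x ^ 2 + 12 * r ^ 2) = w ^ p := by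
    apply mul_left_cancel₀ h7pne
    rw [← mul_assoc, ← ha, hkey]
  have hcopa : IsCoprime a (x ^ 2 + 12 * r ^ 2) :=
    hcop.of_isCoprime_of_dvd_left (ha ▸ dvd_mul_left a _)
  obtain ⟨w₁, hw₁⟩ := Int.eq_pow_of_mul_eq_pow_odd_left hcopa hodd hkey2
  obtain ⟨w₂, hw₂⟩ := Int.eq_pow_of_mul_eq_pow_odd_right hcopa hodd hkey2
  refine ⟨w₁, w₂, by rw [ha, hw₁], hw₂, ?_⟩
  have hx2eq : x ^ 2 = 7 ^ (2 * p - 2) * w₁ ^ (2 * p) := by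
    have h2p : 2 * p - 2 = (p - 1) + (p - 1) := by omega
    rw [ha, hw₁, h2p, two_mul, pow_add, pow_add]
    ring
  rw [← hw₂, ← hx2eq]
  ring
end

section
/- (Case 8 descent) Let $p \ge 5$ be a prime and let $x, r, y$ be integers with $\gcd(x,r) = 1$, $r \ge 1$, satisfying $(x-3r)^3+(x-2r)^3+(x-r)^3+x^3+(x+r)^3+(x+2r)^3+(x+3r)^3 = y^p$. Suppose $7 \mid x$, $2 \nmid x$ and $3 \mid x$. Then there exist integers $w_1, w_2$ with $x = 3^{p-1} \cdot 7^{p-1} w_1^p$, $x^2 + 12r^2 = 3 w_2^p$, and consequently $w_2^p - 3^{2p-3} \cdot 7^{2p-2} w_1^{2p} = 4 r^2$. -/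
/-!
The seven cubes sum to `7x(x² + 12r²)`. Writing `x = 3t`, this is `21x · m` with
`m = 4r² + xt = (x² + 12r²)/3`, and `x` is coprime to `m` because it is odd and coprime to `r`.
As `21 ∣ x`, also `21x` is coprime to `m`, so for odd `p` both factors are `p`-th powers.
Since `21` is squarefree, `21x = a^p` forces `21 ∣ a`, whence `x = 21^(p-1) w₁^p`.
-/

theorem sum_seven_cubes_arith_eq {R : Type*} [CommRing R] (x r : R) :
    (x - 3 * r) ^ 3 + (x - 2 * r) ^ 3 + (x - r) ^ 3 + x ^ 3 +
      (x + r) ^ 3 + (x + 2 * r) ^ 3 + (x + 3 * r) ^ 3 = 7 * x * (x ^ 2 + 12 * r ^ 2) := by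
  ring

theorem IsCoprime.four_mul_sq_add_mul {R : Type*} [CommRing R] {x r : R}
    (h2 : IsCoprime x 2) (hr : IsCoprime x r) (t : R) : IsCoprime x (4 * r ^ 2 + x * t) := by
  have h4 : IsCoprime x (4 * r ^ 2) := by
    simpa only [show (2 : R) ^ 2 = 4 by norm_num] using
      (h2.pow_right (n := 2)).mul_right (hr.pow_right (n := 2))
  exact h4.add_mul_left_right t

theorem Squarefree.exists_eq_pow_pred_mul_pow {R : Type*} [CommMonoidWithZero R] [Nontrivial R]
    [IsCancelMulZero R] [DecompositionMonoid R] {d x a : R} {p : ℕ} (hd : Squarefree d)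
    (hp : p ≠ 0) (h : d * x = a ^ p) : ∃ w, x = d ^ (p - 1) * w ^ p := by
  obtain ⟨w, rfl⟩ : d ∣ a := (hd.dvd_pow_iff_dvd hp).mp ⟨x, h.symm⟩
  refine ⟨w, mul_left_cancel₀ hd.ne_zero ?_⟩
  rw [h, mul_pow, ← mul_assoc, ← pow_succ', Nat.sub_add_cancel (Nat.one_le_iff_ne_zero.mpr hp)]

theorem pow_sub_eq_four_mul_sq {p : ℕ} (hp : 2 ≤ p) {c x r w₁ w₂ : ℤ}
    (hx : x = 3 ^ (p - 1) * c ^ (p - 1) * w₁ ^ p) (hm : x ^ 2 + 12 * r ^ 2 = 3 * w₂ ^ p) :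
    w₂ ^ p - 3 ^ (2 * p - 3) * c ^ (2 * p - 2) * w₁ ^ (2 * p) = 4 * r ^ 2 := by
  obtain ⟨n, rfl⟩ := Nat.exists_eq_add_of_le' hp
  rw [show n + 2 - 1 = n + 1 by omega] at hx
  rw [show 2 * (n + 2) - 3 = 2 * n + 1 by omega, show 2 * (n + 2) - 2 = 2 * n + 2 by omega]
  apply mul_left_cancel₀ (three_ne_zero (α := ℤ))
  rw [hx] at hm
  linear_combination -hm

theorem case8_descent_general
    (p : ℕ) (hp : p.Prime) (hp5 : 5 ≤ p)
    (x r y : ℤ) (hgcd : Int.gcd x r = 1)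
    (heq : (x - 3 * r) ^ 3 + (x - 2 * r) ^ 3 + (x - r) ^ 3 + x ^ 3 +
      (x + r) ^ 3 + (x + 2 * r) ^ 3 + (x + 3 * r) ^ 3 = y ^ p)
    (h7 : (7 : ℤ) ∣ x) (h2 : ¬ (2 : ℤ) ∣ x) (h3 : (3 : ℤ) ∣ x) :
    ∃ w₁ w₂ : ℤ, x = 3 ^ (p - 1) * 7 ^ (p - 1) * w₁ ^ p ∧ x ^ 2 + 12 * r ^ 2 = 3 * w₂ ^ p ∧
      w₂ ^ p - 3 ^ (2 * p - 3) * 7 ^ (2 * p - 2) * w₁ ^ (2 * p) = 4 * r ^ 2 := by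
  obtain ⟨t, ht⟩ := h3
  have hm : x ^ 2 + 12 * r ^ 2 = 3 * (4 * r ^ 2 + x * t) := by rw [ht]; ring
  have h21 : (21 : ℤ) ∣ x := IsCoprime.mul_dvd (by norm_num) ⟨t, ht⟩ h7
  have hxm : IsCoprime x (4 * r ^ 2 + x * t) :=
    ((Int.prime_two.coprime_iff_not_dvd.mpr h2).symm).four_mul_sq_add_mul
      (Int.isCoprime_iff_gcd_eq_one.mpr hgcd) t
  have hcop : IsCoprime (21 * x) (4 * r ^ 2 + x * t) :=
    hxm.pow_left.of_isCoprime_of_dvd_left (sq x ▸ mul_dvd_mul_right h21 x)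
  obtain ⟨⟨a, ha⟩, ⟨w₂, hw₂⟩⟩ := Int.eq_pow_of_mul_eq_pow_odd hcop (hp.odd_of_ne_two (by omega))
    (by rw [← heq, sum_seven_cubes_arith_eq, hm]; ring)
  have hsq : Squarefree (21 : ℤ) := by
    rw [show (21 : ℤ) = 3 * 7 by norm_num, squarefree_mul_iff]
    exact ⟨(show IsCoprime (3 : ℤ) 7 by norm_num).isRelPrime, Int.prime_three.squarefree,
      (show Prime (7 : ℤ) by norm_num).squarefree⟩
  obtain ⟨w₁, hw₁⟩ := hsq.exists_eq_pow_pred_mul_pow hp.ne_zero ha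
  have hx : x = 3 ^ (p - 1) * 7 ^ (p - 1) * w₁ ^ p := by rw [hw₁, ← mul_pow]; norm_num
  have hw : x ^ 2 + 12 * r ^ 2 = 3 * w₂ ^ p := hw₂ ▸ hm
  exact ⟨w₁, w₂, hx, hw, pow_sub_eq_four_mul_sq (by omega) hx hw⟩

theorem case8_descent
    (p : ℕ) (hp : p.Prime) (hp5 : 5 ≤ p)
    (x r y : ℤ) (hgcd : Int.gcd x r = 1) (hr : 1 ≤ r)
    (heq : (x - 3 * r) ^ 3 + (x - 2 * r) ^ 3 + (x - r) ^ 3 + x ^ 3 +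
      (x + r) ^ 3 + (x + 2 * r) ^ 3 + (x + 3 * r) ^ 3 = y ^ p)
    (h7 : (7 : ℤ) ∣ x) (h2 : ¬ (2 : ℤ) ∣ x) (h3 : (3 : ℤ) ∣ x) :
    ∃ w₁ w₂ : ℤ, x = 3 ^ (p - 1) * 7 ^ (p - 1) * w₁ ^ p ∧ x ^ 2 + 12 * r ^ 2 = 3 * w₂ ^ p ∧
      w₂ ^ p - 3 ^ (2 * p - 3) * 7 ^ (2 * p - 2) * w₁ ^ (2 * p) = 4 * r ^ 2 :=
  case8_descent_general p hp hp5 x r y hgcd heq h7 h2 h3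
end
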